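/- arXiv:2307.07970 — 3 statements merged into one kernel-verified Lean document; each statement's English description precedes it below -/
import Mathlib

section
/- For every positive integer M there exists a subset B ⊆ Z_M of size at least M · e^{−O(√(log M))} = M^{1−o(1)} containing no nontrivial 3-term arithmetic progression modulo M: for all a, b, c ∈ B, a + b ≡ 2c (mod M) implies a = b = c. -/
open Real Finset

lemma aux_exp3 {M : ℕ} (hM : 2 ≤ M) : (3 : ℝ) ≤ Real.exp (2 * Real.sqrt (Real.log M)) := by
  have hlog2 : (0.6931471803 : ℝ) < Real.log 2 := Real.log_two_gt_d9
  have hlogM : (0.64 : ℝ) ≤ Real.log M := by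
    have : Real.log 2 ≤ Real.log M := by
      apply Real.log_le_log (by norm_num)
      exact_mod_cast hM
    linarith
  have hsqrt : (0.8 : ℝ) ≤ Real.sqrt (Real.log M) := by
    exact Real.le_sqrt_of_sq_le (by nlinarith)
  have h1 : Real.exp 1.6 ≤ Real.exp (2 * Real.sqrt (Real.log M)) :=
    Real.exp_le_exp.2 (by linarith)
  have h2 : (3 : ℝ) ≤ Real.exp 1.6 := by
    have : Real.exp 0.8 ≥ 1.8 := by
      have := Real.add_one_le_exp (0.8 : ℝ)
      linarith
    have e : Real.exp 1.6 = Real.exp 0.8 * Real.exp 0.8 := by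
      rw [← Real.exp_add]; norm_num
    nlinarith [Real.exp_pos (0.8 : ℝ)]
  linarith

/-- Behrend / Salem–Spencer: for every positive integer `M` there is a subset
`B ⊆ ℤ_M` of size at least `M · e^{-C√(log M)} = M^{1-o(1)}` containing no nontrivial
3-term arithmetic progression modulo `M`: `a + b = 2c` with `a,b,c ∈ B` forces `a = b = c`. -/
theorem stmt9 : ∃ C : ℝ, 0 < C ∧ ∀ M : ℕ, 1 ≤ M →
    ∃ B : Finset (ZMod M),
      (∀ a ∈ B, ∀ b ∈ B, ∀ c ∈ B, a + b = 2 * c → a = c ∧ b = c) ∧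
      (M : ℝ) * Real.exp (-C * Real.sqrt (Real.log M)) ≤ B.card := by
  refine ⟨6, by norm_num, fun M hM => ?_⟩
  rcases eq_or_lt_of_le hM with h1 | hM2
  · -- M = 1
    refine ⟨{0}, ?_, ?_⟩
    · intro a _ b _ c _ _
      subst h1
      exact ⟨Subsingleton.elim a c, Subsingleton.elim b c⟩
    · rw [← h1]
      simp
  · -- M ≥ 2
    have hM2 : 2 ≤ M := hM2
    set N := M / 2 with hN
    obtain ⟨T, hTsub, hTcard, hTfree⟩ := rothNumberNat_spec N
    have hTlt : ∀ x ∈ T, x < N := fun x hx => mem_range.1 (hTsub hx)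
    have hNM : 2 * N ≤ M := by omega
    have hinj : Set.InjOn (fun x : ℕ => (x : ZMod M)) ↑T := by
      intro x hx y hy hxy
      have hxM : x < M := lt_of_lt_of_le (hTlt x hx) (by omega)
      have hyM : y < M := lt_of_lt_of_le (hTlt y hy) (by omega)
      have := congrArg ZMod.val hxy
      rwa [ZMod.val_natCast_of_lt hxM, ZMod.val_natCast_of_lt hyM] at this
    refine ⟨T.image (fun x : ℕ => (x : ZMod M)), ?_, ?_⟩
    · intro a ha b hb c hc habc
      obtain ⟨x, hx, rfl⟩ := mem_image.1 ha
      obtain ⟨y, hy, rfl⟩ := mem_image.1 hb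
      obtain ⟨z, hz, rfl⟩ := mem_image.1 hc
      have hxyz : ((x + y : ℕ) : ZMod M) = ((z + z : ℕ) : ZMod M) := by
        push_cast; linear_combination habc
      have hxyM : x + y < M := by have := hTlt x hx; have := hTlt y hy; omega
      have hzzM : z + z < M := by have := hTlt z hz; omega
      have heq : x + y = z + z := by
        have := congrArg ZMod.val hxyz
        rwa [ZMod.val_natCast_of_lt hxyM, ZMod.val_natCast_of_lt hzzM] at this
      have h1 : x = z := hTfree (Finset.mem_coe.2 hx) (Finset.mem_coe.2 hz) (Finset.mem_coe.2 hy) heq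
      have h2 : y = z := hTfree (Finset.mem_coe.2 hy) (Finset.mem_coe.2 hz) (Finset.mem_coe.2 hx) (by omega)
      exact ⟨by rw [h1], by rw [h2]⟩
    · rw [Finset.card_image_of_injOn hinj, hTcard]
      have hroth : (N : ℝ) * Real.exp (-4 * Real.sqrt (Real.log N)) ≤ rothNumberNat N :=
        Behrend.roth_lower_bound
      have hN1 : 1 ≤ N := by omega
      have hlogN : Real.log N ≤ Real.log M :=
        Real.log_le_log (by exact_mod_cast hN1) (Nat.cast_le.2 (Nat.div_le_self M 2))
      have hsqrtN : Real.sqrt (Real.log N) ≤ Real.sqrt (Real.log M) :=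
        Real.sqrt_le_sqrt hlogN
      have hexpN : Real.exp (-4 * Real.sqrt (Real.log M)) ≤ Real.exp (-4 * Real.sqrt (Real.log N)) :=
        Real.exp_le_exp.2 (by linarith)
      have hN3 : (M : ℝ) / 3 ≤ N := by
        have : M ≤ 3 * N := by omega
        have := (Nat.cast_le (α := ℝ)).2 this
        push_cast at this
        linarith
      have h3 : (3:ℝ) ≤ Real.exp (2 * Real.sqrt (Real.log M)) := aux_exp3 hM2
      have key : (M : ℝ) * Real.exp (-6 * Real.sqrt (Real.log M)) ≤
          (N : ℝ) * Real.exp (-4 * Real.sqrt (Real.log N)) := by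
        have e : Real.exp (-6 * Real.sqrt (Real.log M)) =
            Real.exp (-4 * Real.sqrt (Real.log M)) / Real.exp (2 * Real.sqrt (Real.log M)) := by
          rw [← Real.exp_sub]; ring_nf
        have hexpos := Real.exp_pos (-4 * Real.sqrt (Real.log M))
        have hexpos2 := Real.exp_pos (2 * Real.sqrt (Real.log M))
        have hinv : (Real.exp (2 * Real.sqrt (Real.log M)))⁻¹ ≤ 3⁻¹ :=
          inv_anti₀ (by norm_num) h3
        have step1 : (M : ℝ) * Real.exp (-6 * Real.sqrt (Real.log M)) ≤
            (M : ℝ) / 3 * Real.exp (-4 * Real.sqrt (Real.log M)) := by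
          rw [e, div_eq_mul_inv]
          calc (M : ℝ) * (Real.exp (-4 * Real.sqrt (Real.log M)) * (Real.exp (2 * Real.sqrt (Real.log M)))⁻¹)
              = ((M : ℝ) * Real.exp (-4 * Real.sqrt (Real.log M))) * (Real.exp (2 * Real.sqrt (Real.log M)))⁻¹ := by ring
            _ ≤ ((M : ℝ) * Real.exp (-4 * Real.sqrt (Real.log M))) * 3⁻¹ :=
                mul_le_mul_of_nonneg_left hinv (by positivity)
            _ = (M : ℝ) / 3 * Real.exp (-4 * Real.sqrt (Real.log M)) := by ring
        have step2 : (M : ℝ) / 3 * Real.exp (-4 * Real.sqrt (Real.log M)) ≤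
            (N : ℝ) * Real.exp (-4 * Real.sqrt (Real.log N)) := by
          have := mul_le_mul hN3 hexpN (le_of_lt hexpos) (Nat.cast_nonneg N)
          linarith
        linarith
      calc (M : ℝ) * Real.exp (-6 * Real.sqrt (Real.log M))
          ≤ (N : ℝ) * Real.exp (-4 * Real.sqrt (Real.log N)) := key
        _ ≤ rothNumberNat N := hroth
end

section
/- Fix a prime M (M odd) and nonnegative integers n, L. Choose b_0, w_0, w_1, ..., w_n uniformly and independently from {0,...,M−1}, and define h_X(I) = b_0 + ∑_t w_t I_t mod M, h_Y(J) = b_0 + w_0 + ∑_t w_t J_t mod M, h_Z(K) = b_0 + 2^{-1}(w_0 + ∑_t w_t (L − K_t)) mod M, where 2^{-1} is the inverse of 2 mod M. Then for any triple of sequences (I, J, K) ∈ ({0,...,L}^n)^3 with I_t + J_t + K_t = L for all t, and any b ∈ {0,...,M−1}, the probability that h_X(I) = h_Y(J) = h_Z(K) = b is exactly 1/M². -/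
open Finset

/-- Asymmetric hashing: with `b₀, w₀, …, w_n` uniform and independent modulo an odd prime
`M`, and hash functions `h_X(I) = b₀ + ∑ w_t I_t`, `h_Y(J) = b₀ + w₀ + ∑ w_t J_t`,
`h_Z(K) = b₀ + 2⁻¹(w₀ + ∑ w_t (L - K_t))`, any block triple `(I,J,K)` with
`I_t + J_t + K_t = L` for all `t` lands in a given bucket `b` (i.e.
`h_X(I) = h_Y(J) = h_Z(K) = b`) with probability exactly `1/M²`. -/
theorem stmt10 (M n L : ℕ) (hM : Nat.Prime M) (hModd : M ≠ 2) [NeZero M]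
    (I J K : Fin n → ℕ)
    (hI : ∀ t, I t ≤ L) (hJ : ∀ t, J t ≤ L) (hK : ∀ t, K t ≤ L)
    (hIJK : ∀ t, I t + J t + K t = L) (b : ZMod M) :
    ((univ.filter fun p : ZMod M × (Fin (n + 1) → ZMod M) =>
        (p.1 + ∑ t : Fin n, p.2 t.succ * (I t : ZMod M)) = b ∧
        (p.1 + p.2 0 + ∑ t : Fin n, p.2 t.succ * (J t : ZMod M)) = b ∧
        (p.1 + (2 : ZMod M)⁻¹ * (p.2 0 + ∑ t : Fin n, p.2 t.succ * ((L - K t : ℕ) : ZMod M)))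
          = b).card : ℝ) /
      (Fintype.card (ZMod M × (Fin (n + 1) → ZMod M)) : ℝ) = 1 / (M : ℝ) ^ 2 := by
  classical
  haveI := Fact.mk hM
  have h2 : (2 : ZMod M) ≠ 0 := by
    have : ¬ (M ∣ 2) := by
      intro h
      exact hModd ((Nat.prime_dvd_prime_iff_eq hM Nat.prime_two).mp h)
    have h2' : ((2 : ℕ) : ZMod M) ≠ 0 := by
      rwa [Ne, ZMod.natCast_eq_zero_iff]
    simpa using h2'
  have hcastK : ∀ t : Fin n, ((L - K t : ℕ) : ZMod M) = (I t : ZMod M) + (J t : ZMod M) := by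
    intro t
    have h := hIJK t
    have : L - K t = I t + J t := by omega
    rw [this]; push_cast; ring
  -- simplify the filter: third condition follows from the first two
  have hfil : (univ.filter fun p : ZMod M × (Fin (n + 1) → ZMod M) =>
        (p.1 + ∑ t : Fin n, p.2 t.succ * (I t : ZMod M)) = b ∧
        (p.1 + p.2 0 + ∑ t : Fin n, p.2 t.succ * (J t : ZMod M)) = b ∧
        (p.1 + (2 : ZMod M)⁻¹ * (p.2 0 + ∑ t : Fin n, p.2 t.succ * ((L - K t : ℕ) : ZMod M)))
          = b)
      = (univ.filter fun p : ZMod M × (Fin (n + 1) → ZMod M) =>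
        (p.1 + ∑ t : Fin n, p.2 t.succ * (I t : ZMod M)) = b ∧
        (p.1 + p.2 0 + ∑ t : Fin n, p.2 t.succ * (J t : ZMod M)) = b) := by
    apply filter_congr
    intro p _
    constructor
    · rintro ⟨h1, h2', _⟩; exact ⟨h1, h2'⟩
    · rintro ⟨h1, h2'⟩
      refine ⟨h1, h2', ?_⟩
      have hsum : ∑ t : Fin n, p.2 t.succ * ((L - K t : ℕ) : ZMod M)
          = (∑ t : Fin n, p.2 t.succ * (I t : ZMod M))
            + ∑ t : Fin n, p.2 t.succ * (J t : ZMod M) := by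
        rw [← Finset.sum_add_distrib]
        apply Finset.sum_congr rfl
        intro t _
        rw [hcastK t]; ring
      rw [hsum]
      have hinv : (2 : ZMod M)⁻¹ * 2 = 1 := inv_mul_cancel₀ h2
      linear_combination (2 : ZMod M)⁻¹ * h1 + (2 : ZMod M)⁻¹ * h2'
        + (b - p.1) * hinv
  rw [hfil]
  -- count the simplified filter via a bijection with `Fin n → ZMod M`
  have hcard : (univ.filter fun p : ZMod M × (Fin (n + 1) → ZMod M) =>
        (p.1 + ∑ t : Fin n, p.2 t.succ * (I t : ZMod M)) = b ∧
        (p.1 + p.2 0 + ∑ t : Fin n, p.2 t.succ * (J t : ZMod M)) = b).card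
      = M ^ n := by
    rw [show (M : ℕ) ^ n = (univ : Finset (Fin n → ZMod M)).card by
      simp [ZMod.card]]
    refine Finset.card_bij'
      (fun (p : ZMod M × (Fin (n + 1) → ZMod M)) _ => fun t : Fin n => p.2 t.succ)
      (fun (w : Fin n → ZMod M) _ => ((b - ∑ t : Fin n, w t * (I t : ZMod M)),
        Fin.cons ((∑ t : Fin n, w t * (I t : ZMod M))
          - ∑ t : Fin n, w t * (J t : ZMod M)) w)) ?_ ?_ ?_ ?_
    · intro p hp
      exact mem_univ _
    · intro w _
      simp only [mem_filter, mem_univ, true_and, Fin.cons_succ, Fin.cons_zero]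
      constructor <;> ring
    · intro p hp
      simp only [mem_filter, mem_univ, true_and] at hp
      obtain ⟨h1, h2'⟩ := hp
      refine Prod.ext ?_ ?_
      · simp only
        linear_combination -h1
      · funext x
        refine Fin.cases ?_ ?_ x
        · simp only [Fin.cons_zero]
          linear_combination h1 - h2'
        · intro i
          simp [Fin.cons_succ]
    · intro w _
      funext t
      simp [Fin.cons_succ]
  rw [hcard]
  have hMpos : (0 : ℝ) < M := by
    exact_mod_cast hM.pos
  rw [show Fintype.card (ZMod M × (Fin (n + 1) → ZMod M)) = M ^ (n + 2) by
    simp [ZMod.card]; ring]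
  push_cast
  rw [pow_add]
  field_simp
end

section
/- Let T be a partitioned tensor with equal-size parts in each dimension and M_X, M_Y, M_Z parts in the X-, Y-, Z-dimensions. Suppose there is a set G of triples of partition-preserving, structure-preserving permutations such that a uniformly random element of G maps any fixed part to a uniformly random part in each dimension. Then for any subsets of parts P_X, P'_X ⊆ P_X-parts, P_Y, P'_Y, P_Z, P'_Z, there exists (π_X, π_Y, π_Z) ∈ G simultaneously satisfying |P_X ∩ π_X(P'_X)| ≤ 4|P_X||P'_X|/M_X, |P_Y ∩ π_Y(P'_Y)| ≤ 4|P_Y||P'_Y|/M_Y, and |P_Z ∩ π_Z(P'_Z)| ≤ 4|P_Z||P'_Z|/M_Z. -/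
/-!
Fix one dimension. By uniformity, the expected size of `P ∩ π(P')` over a uniform `π ∈ G` is at
most `|P||P'|/M`, so by Markov's inequality at most a quarter of `G` makes it exceed
`4|P||P'|/M`. A union bound over the three dimensions leaves an element of `G` that is good in
all of them.
-/

open Finset

namespace Finset

variable {ι α β : Type*}

theorem mul_card_filter_mul_lt_le_card {G : Finset ι} {f : ι → ℝ} (hf : ∀ g ∈ G, 0 ≤ f g)
    {μ c : ℝ} (hc : 0 < c) (hsum : ∑ g ∈ G, f g ≤ μ * #G) :
    c * #{g ∈ G | c * μ < f g} ≤ #G := by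
  set S := {g ∈ G | c * μ < f g}
  obtain hS | ⟨g₀, hg₀⟩ := S.eq_empty_or_nonempty
  · simp [hS]
  have hg₀G : g₀ ∈ G := (mem_filter.mp hg₀).1
  have hsum_S : ∑ g ∈ S, f g ≤ ∑ g ∈ G, f g :=
    sum_le_sum_of_subset_of_nonneg (filter_subset _ _) fun g hg _ => hf g hg
  have hmarkov : #S • (c * μ) ≤ ∑ g ∈ S, f g :=
    card_nsmul_le_sum _ _ _ fun g hg => (mem_filter.mp hg).2.le
  have hf₀ : f g₀ ≤ ∑ g ∈ G, f g := single_le_sum hf hg₀G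
  have hG : (0 : ℝ) < #G := by exact_mod_cast card_pos.mpr ⟨g₀, hg₀G⟩
  -- If `μ ≤ 0`, the bound on the sum forces `f = 0` on `G`, so no `g₀` with `c * μ < f g₀` exists.
  have hμ : 0 < μ := by
    by_contra! hμ
    have hlt : c * μ < f g₀ := (mem_filter.mp hg₀).2
    nlinarith [hf g₀ hg₀G, mul_nonpos_of_nonpos_of_nonneg hμ hG.le]
  rw [nsmul_eq_mul] at hmarkov
  exact le_of_mul_le_mul_right (by linarith : c * #S * μ ≤ #G * μ) hμ

theorem sum_card_filter_exists_le (G : Finset ι) (P : Finset β) (P' : Finset α)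
    (Q : α → β → ι → Prop) [∀ t t' g, Decidable (Q t t' g)] :
    ∑ g ∈ G, #{t' ∈ P | ∃ t ∈ P', Q t t' g} ≤ ∑ t ∈ P', ∑ t' ∈ P, #{g ∈ G | Q t t' g} := by
  classical
  calc ∑ g ∈ G, #{t' ∈ P | ∃ t ∈ P', Q t t' g}
      ≤ ∑ g ∈ G, ∑ t ∈ P', #{t' ∈ P | Q t t' g} := by
        refine sum_le_sum fun g _ => (card_le_card ?_).trans card_biUnion_le
        intro t' ht'
        obtain ⟨ht'P, t, ht, hQ⟩ := mem_filter.mp ht'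
        exact mem_biUnion.mpr ⟨t, ht, mem_filter.mpr ⟨ht'P, hQ⟩⟩
    _ = ∑ t ∈ P', ∑ t' ∈ P, #{g ∈ G | Q t t' g} := by
        rw [sum_comm]
        exact sum_congr rfl fun t _ =>
          sum_card_bipartiteAbove_eq_sum_card_bipartiteBelow (fun g t' => Q t t' g)

theorem card_filter_eq_div {G : Finset ι} {p : ι → Prop} [DecidablePred p] {M : ℕ}
    (h : #{g ∈ G | p g} * M = #G) : (#{g ∈ G | p g} : ℝ) = #G / M := by
  obtain rfl | hM := eq_or_ne M 0
  · have hG : #G = 0 := by simpa using h.symm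
    have : #{g ∈ G | p g} = 0 := Nat.eq_zero_of_le_zero (hG ▸ card_filter_le G p)
    simp [this]
  · rw [eq_div_iff (by exact_mod_cast hM)]
    exact_mod_cast h

theorem sum_card_filter_exists_le_div_mul_card {G : Finset ι} {P : Finset β} {P' : Finset α}
    {Q : α → β → ι → Prop} [∀ t t' g, Decidable (Q t t' g)] {M : ℕ}
    (hunif : ∀ t ∈ P', ∀ t' ∈ P, #{g ∈ G | Q t t' g} * M = #G) :
    ∑ g ∈ G, (#{t' ∈ P | ∃ t ∈ P', Q t t' g} : ℝ) ≤ #P * #P' / M * #G := by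
  calc ∑ g ∈ G, (#{t' ∈ P | ∃ t ∈ P', Q t t' g} : ℝ)
      ≤ ∑ t ∈ P', ∑ t' ∈ P, (#{g ∈ G | Q t t' g} : ℝ) := by
        exact_mod_cast sum_card_filter_exists_le G P P' Q
    _ = ∑ t ∈ P', ∑ t' ∈ P, (#G / M : ℝ) :=
        sum_congr rfl fun t ht => sum_congr rfl fun t' ht' =>
          card_filter_eq_div (hunif t ht t' ht')
    _ = #P * #P' / M * #G := by
        simp only [sum_const, nsmul_eq_mul]
        ring

theorem four_mul_card_filter_not_le_card {G : Finset ι} {P : Finset β} {P' : Finset α}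
    {Q : α → β → ι → Prop} [∀ t t' g, Decidable (Q t t' g)] {M : ℕ}
    (hunif : ∀ t ∈ P', ∀ t' ∈ P, #{g ∈ G | Q t t' g} * M = #G) :
    4 * #{g ∈ G | ¬ (#{t' ∈ P | ∃ t ∈ P', Q t t' g} : ℝ) ≤ 4 * #P * #P' / M} ≤ #G := by
  have h := mul_card_filter_mul_lt_le_card (fun g _ => Nat.cast_nonneg _)
    (by norm_num : (0 : ℝ) < 4) (sum_card_filter_exists_le_div_mul_card hunif)
  simp only [not_le, mul_div_assoc, mul_assoc] at h ⊢
  exact_mod_cast h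

theorem exists_mem_and_and_of_four_mul_card_filter_not_le {G : Finset ι} (hG : G.Nonempty)
    {p q r : ι → Prop} [DecidablePred p] [DecidablePred q] [DecidablePred r]
    (hp : 4 * #{g ∈ G | ¬ p g} ≤ #G) (hq : 4 * #{g ∈ G | ¬ q g} ≤ #G)
    (hr : 4 * #{g ∈ G | ¬ r g} ≤ #G) : ∃ g ∈ G, p g ∧ q g ∧ r g := by
  classical
  by_contra! h
  have hcover : G ⊆ {g ∈ G | ¬ p g} ∪ {g ∈ G | ¬ q g} ∪ {g ∈ G | ¬ r g} := by
    intro g hg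
    simp only [mem_union, mem_filter]
    tauto
  have := card_le_card hcover
  have := card_union_le ({g ∈ G | ¬ p g} ∪ {g ∈ G | ¬ q g}) {g ∈ G | ¬ r g}
  have := card_union_le {g ∈ G | ¬ p g} {g ∈ G | ¬ q g}
  have := hG.card_pos
  omega

end Finset

theorem stmt14_general {X Y Z : Type*} [Fintype X] [Fintype Y] [Fintype Z]
    {MX MY MZ : ℕ} (pX : X → Fin MX) (pY : Y → Fin MY) (pZ : Z → Fin MZ)
    (G : Finset (Equiv.Perm X × Equiv.Perm Y × Equiv.Perm Z)) (hG : G.Nonempty)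
    -- uniformity: a random element of `G` maps a fixed part to a uniformly random part
    (hunifX : ∀ t t' : Fin MX,
      (G.filter fun g => ∀ x, pX x = t → pX (g.1 x) = t').card * MX = G.card)
    (hunifY : ∀ t t' : Fin MY,
      (G.filter fun g => ∀ y, pY y = t → pY (g.2.1 y) = t').card * MY = G.card)
    (hunifZ : ∀ t t' : Fin MZ,
      (G.filter fun g => ∀ z, pZ z = t → pZ (g.2.2 z) = t').card * MZ = G.card) :
    ∀ (PX PX' : Finset (Fin MX)) (PY PY' : Finset (Fin MY)) (PZ PZ' : Finset (Fin MZ)),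
      ∃ g ∈ G,
        ((PX.filter fun t' => ∃ t ∈ PX', ∀ x, pX x = t → pX (g.1 x) = t').card : ℝ)
            ≤ 4 * PX.card * PX'.card / MX ∧
        ((PY.filter fun t' => ∃ t ∈ PY', ∀ y, pY y = t → pY (g.2.1 y) = t').card : ℝ)
            ≤ 4 * PY.card * PY'.card / MY ∧
        ((PZ.filter fun t' => ∃ t ∈ PZ', ∀ z, pZ z = t → pZ (g.2.2 z) = t').card : ℝ)
            ≤ 4 * PZ.card * PZ'.card / MZ := by
  intro PX PX' PY PY' PZ PZ'
  have hX := four_mul_card_filter_not_le_card (G := G) (P := PX) (P' := PX')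
    (Q := fun t t' g => ∀ x, pX x = t → pX (g.1 x) = t') fun t _ t' _ => hunifX t t'
  have hY := four_mul_card_filter_not_le_card (G := G) (P := PY) (P' := PY')
    (Q := fun t t' g => ∀ y, pY y = t → pY (g.2.1 y) = t') fun t _ t' _ => hunifY t t'
  have hZ := four_mul_card_filter_not_le_card (G := G) (P := PZ) (P' := PZ')
    (Q := fun t t' g => ∀ z, pZ z = t → pZ (g.2.2 z) = t') fun t _ t' _ => hunifZ t t'
  -- The statement decides `∃ t ∈ P', _` over `Fin M` by `Nat.decidableExistsFin`, the lemmas by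
  -- `decidableExistsAndFinsetCoe`; `convert` identifies the two instances.
  exact exists_mem_and_and_of_four_mul_card_filter_not_le hG (by convert hX) (by convert hY)
    (by convert hZ)

/-- Shuffling lemma: let `T` be a partitioned tensor with equal-size parts
(`M_X`, `M_Y`, `M_Z` parts in the three dimensions), and let `G` be a set of triples of
partition-preserving, structure-preserving permutations such that a uniformly random
element of `G` maps any fixed part to a uniformly random part in each dimension.
Then for any sets of parts `P_X, P'_X`, `P_Y, P'_Y`, `P_Z, P'_Z` there is a single
`(π_X, π_Y, π_Z) ∈ G` with `|P_W ∩ π_W(P'_W)| ≤ 4|P_W||P'_W|/M_W` for `W ∈ {X,Y,Z}`. -/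
theorem stmt14 {X Y Z : Type*} [Fintype X] [Fintype Y] [Fintype Z]
    [DecidableEq X] [DecidableEq Y] [DecidableEq Z]
    {MX MY MZ : ℕ} (pX : X → Fin MX) (pY : Y → Fin MY) (pZ : Z → Fin MZ)
    (T : X → Y → Z → ℝ)
    (G : Finset (Equiv.Perm X × Equiv.Perm Y × Equiv.Perm Z)) (hG : G.Nonempty)
    -- partition-preserving: each permutation induces a permutation of the parts
    (hpartX : ∀ g ∈ G, ∃ σ : Equiv.Perm (Fin MX), ∀ x, pX (g.1 x) = σ (pX x))
    (hpartY : ∀ g ∈ G, ∃ σ : Equiv.Perm (Fin MY), ∀ y, pY (g.2.1 y) = σ (pY y))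
    (hpartZ : ∀ g ∈ G, ∃ σ : Equiv.Perm (Fin MZ), ∀ z, pZ (g.2.2 z) = σ (pZ z))
    -- structure-preserving: the coefficients of `T` are preserved
    (hstruct : ∀ g ∈ G, ∀ x y z, T x y z = T (g.1 x) (g.2.1 y) (g.2.2 z))
    -- equal-size parts
    (hsizeX : ∀ t t' : Fin MX,
      (univ.filter fun x => pX x = t).card = (univ.filter fun x => pX x = t').card)
    (hsizeY : ∀ t t' : Fin MY,
      (univ.filter fun y => pY y = t).card = (univ.filter fun y => pY y = t').card)
    (hsizeZ : ∀ t t' : Fin MZ,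
      (univ.filter fun z => pZ z = t).card = (univ.filter fun z => pZ z = t').card)
    -- uniformity: a random element of `G` maps a fixed part to a uniformly random part
    (hunifX : ∀ t t' : Fin MX,
      (G.filter fun g => ∀ x, pX x = t → pX (g.1 x) = t').card * MX = G.card)
    (hunifY : ∀ t t' : Fin MY,
      (G.filter fun g => ∀ y, pY y = t → pY (g.2.1 y) = t').card * MY = G.card)
    (hunifZ : ∀ t t' : Fin MZ,
      (G.filter fun g => ∀ z, pZ z = t → pZ (g.2.2 z) = t').card * MZ = G.card) :
    ∀ (PX PX' : Finset (Fin MX)) (PY PY' : Finset (Fin MY)) (PZ PZ' : Finset (Fin MZ)),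
      ∃ g ∈ G,
        ((PX.filter fun t' => ∃ t ∈ PX', ∀ x, pX x = t → pX (g.1 x) = t').card : ℝ)
            ≤ 4 * PX.card * PX'.card / MX ∧
        ((PY.filter fun t' => ∃ t ∈ PY', ∀ y, pY y = t → pY (g.2.1 y) = t').card : ℝ)
            ≤ 4 * PY.card * PY'.card / MY ∧
        ((PZ.filter fun t' => ∃ t ∈ PZ', ∀ z, pZ z = t → pZ (g.2.2 z) = t').card : ℝ)
            ≤ 4 * PZ.card * PZ'.card / MZ :=
  stmt14_general pX pY pZ G hG hunifX hunifY hunifZ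
end
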